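/- Let n ≥ 2, let L ⊂ ℝ^{n−1} be a convex body with 0 ∈ int L, and let K ⊂ ℝⁿ be a convex body with ξ_{L×[−1,1]}(K) ≥ 4. Then K contains a unit-direction vertical segment of ‖·‖_{L×[−1,1]}-length 2: there exists x ∈ ℝⁿ such that x + s·eₙ ∈ K for all s ∈ [−1,1], where eₙ is the n-th standard basis vector. -/

import Mathlib

open scoped BigOperators Pointwise RealInnerProductSpace
open MeasureTheory

noncomputable section

/-- The support-function "norm" `‖q‖_T = max_{p ∈ T} ⟨p, q⟩`. -/
def suppNorm {d : ℕ} (T : Set (EuclideanSpace ℝ (Fin d)))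
    (q : EuclideanSpace ℝ (Fin d)) : ℝ :=
  sSup ((fun p : EuclideanSpace ℝ (Fin d) => ⟪p, q⟫) '' T)

/-- Cyclic successor on `Fin m`. -/
def cyc {m : ℕ} (i : Fin m) : Fin m := ⟨(i.val + 1) % m, Nat.mod_lt _ i.pos⟩

/-- The `T`-length of the closed polygonal line through `q 0, …, q (m-1)`. -/
def polyLen {d : ℕ} (T : Set (EuclideanSpace ℝ (Fin d))) {m : ℕ}
    (q : Fin m → EuclideanSpace ℝ (Fin d)) : ℝ :=
  ∑ i : Fin m, suppNorm T (q (cyc i) - q i)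

/-- `q` does not fit into a translate of the interior of `K`. -/
def NotFit {d : ℕ} (K : Set (EuclideanSpace ℝ (Fin d))) {m : ℕ}
    (q : Fin m → EuclideanSpace ℝ (Fin d)) : Prop :=
  ∀ t : EuclideanSpace ℝ (Fin d), ¬ (∀ i, q i - t ∈ interior K)

/-- `ξ_T(K)`: the infimum of `T`-lengths of closed polygonal lines not fitting into a
translate of the interior of `K`. -/
def xi {d : ℕ} (T K : Set (EuclideanSpace ℝ (Fin d))) : ℝ :=
  sInf { L : ℝ | ∃ m : ℕ, 2 ≤ m ∧ ∃ q : Fin m → EuclideanSpace ℝ (Fin d),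
    NotFit K q ∧ L = polyLen T q }

/-- A convex body: compact, convex, with nonempty interior. -/
def IsConvexBody {d : ℕ} (K : Set (EuclideanSpace ℝ (Fin d))) : Prop :=
  IsCompact K ∧ Convex ℝ K ∧ (interior K).Nonempty

/-- The polar set `S° = {p : ⟨p, q⟩ ≤ 1 ∀ q ∈ S}`. -/
def polarSet {d : ℕ} (S : Set (EuclideanSpace ℝ (Fin d))) :
    Set (EuclideanSpace ℝ (Fin d)) :=
  { p | ∀ q ∈ S, ⟪p, q⟫ ≤ 1 }

/-- The permutohedron: the Minkowski sum of all edges of the simplex with vertices `v`. -/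
def permutohedron {n : ℕ} (v : Fin (n + 1) → EuclideanSpace ℝ (Fin n)) :
    Set (EuclideanSpace ℝ (Fin n)) :=
  ∑ p ∈ Finset.univ.filter (fun p : Fin (n + 1) × Fin (n + 1) => p.1 < p.2),
    segment ℝ (v p.1) (v p.2)

end

/-- The Lagrangian-product body `L × [-1,1] ⊆ ℝᵐ × ℝ = ℝ^{m+1}`. -/
def prodSeg {m : ℕ} (L : Set (EuclideanSpace ℝ (Fin m))) :
    Set (EuclideanSpace ℝ (Fin (m + 1))) :=
  { x | (show EuclideanSpace ℝ (Fin m) from WithLp.toLp 2 (fun i => x i.castSucc)) ∈ L ∧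
        |x (Fin.last m)| ≤ 1 }

/-!
For every `c < 1` the two-point polygon `(-c • eₙ, c • eₙ)` has `L × [-1, 1]`-length at most
`4c < 4`, so `ξ ≥ 4` forces it to fit into a translate of `int K`: `K` contains a vertical
segment of half-length `c`. Compactness of `K` lets `c → 1`, and convexity fills in the
segment between the two limit endpoints.
-/

open Filter Topology

theorem Convex.add_smul_mem_of_add_mem_of_sub_mem {E : Type*} [AddCommGroup E] [Module ℝ E]
    {K : Set E} {x v : E} (hK : Convex ℝ K) (hadd : x + v ∈ K)
    (hsub : x - v ∈ K) {s : ℝ} (hs : s ∈ Set.Icc (-1 : ℝ) 1) : x + s • v ∈ K := by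
  have hx : x + s • v = ((1 + s) / 2) • (x + v) + ((1 - s) / 2) • (x - v) := by module
  rw [hx]
  exact hK hadd hsub (by linarith [hs.1]) (by linarith [hs.2]) (by ring)

theorem IsCompact.exists_add_mem_sub_mem_of_forall_lt_one {E : Type*} [NormedAddCommGroup E]
    [NormedSpace ℝ E] {K : Set E} (hK : IsCompact K) {v : E}
    (h : ∀ c ∈ Set.Ico (0 : ℝ) 1, ∃ x, x + c • v ∈ K ∧ x - c • v ∈ K) :
    ∃ x, x + v ∈ K ∧ x - v ∈ K := by
  set c : ℕ → ℝ := fun k => k / (k + 1)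
  have hc : ∀ k, c k ∈ Set.Ico (0 : ℝ) 1 := fun k =>
    ⟨by positivity, (div_lt_one (by positivity)).2 (lt_add_one _)⟩
  choose x hxadd hxsub using fun k => h (c k) (hc k)
  obtain ⟨y, hyK, φ, hφ, hy⟩ := hK.tendsto_subseq hxadd
  have hcφ : Tendsto (c ∘ φ) atTop (𝓝 1) :=
    (tendsto_natCast_div_add_atTop (1 : ℝ)).comp hφ.tendsto_atTop
  -- The lower endpoints `x k - c k • v` are the upper ones shifted by `-2 c k • v`.
  have hlow : Tendsto (fun j => x (φ j) - c (φ j) • v) atTop (𝓝 (y - (2 : ℝ) • v)) := by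
    have := hy.sub (((tendsto_const_nhds (x := (2 : ℝ))).mul hcφ).smul_const v)
    simp only [Function.comp_apply, mul_one] at this
    refine this.congr fun j => ?_
    module
  refine ⟨y - v, by simpa using hyK, ?_⟩
  have hlim := hK.isClosed.mem_of_tendsto hlow (Eventually.of_forall fun j => hxsub (φ j))
  convert hlim using 1
  module

theorem xi_lt_of_polyLen_lt {d m : ℕ} {T K : Set (EuclideanSpace ℝ (Fin d))}
    {q : Fin m → EuclideanSpace ℝ (Fin d)} (hm : 2 ≤ m) (hq : NotFit K q) {r : ℝ}
    (hr : 0 < r) (hlen : polyLen T q < r) : xi T K < r := by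
  by_cases hbdd : BddBelow { L : ℝ | ∃ m : ℕ, 2 ≤ m ∧ ∃ q : Fin m → EuclideanSpace ℝ (Fin d),
      NotFit K q ∧ L = polyLen T q }
  · exact (csInf_le hbdd ⟨m, hm, q, hq, rfl⟩).trans_lt hlen
  · -- `sInf` of a set of reals that is not bounded below is `0`.
    rwa [xi, Real.sInf_of_not_bddBelow hbdd]

section Vertical
variable {m : ℕ} {L : Set (EuclideanSpace ℝ (Fin m))}

local notation "eₙ" => EuclideanSpace.single (Fin.last m) (1 : ℝ)

theorem suppNorm_prodSeg_smul_single_le (a : ℝ) : suppNorm (prodSeg L) (a • eₙ) ≤ |a| := by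
  refine Real.sSup_le ?_ (abs_nonneg a)
  rintro _ ⟨p, hp, rfl⟩
  have hpn : |p (Fin.last m)| ≤ 1 := hp.2
  calc ⟪p, a • eₙ⟫ = a * p (Fin.last m) := by
        simp [real_inner_smul_right, EuclideanSpace.inner_single_right]
    _ ≤ |a| * |p (Fin.last m)| := by rw [← abs_mul]; exact le_abs_self _
    _ ≤ |a| := mul_le_of_le_one_right (abs_nonneg a) hpn

theorem polyLen_prodSeg_vertical_le (c : ℝ) :
    polyLen (prodSeg L) ![-(c • eₙ), c • eₙ] ≤ 4 * |c| := by
  have hup : c • eₙ - -(c • eₙ) = (2 * c) • eₙ := by module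
  have hdown : -(c • eₙ) - c • eₙ = (-(2 * c)) • eₙ := by module
  have hlen := add_le_add (suppNorm_prodSeg_smul_single_le (L := L) (2 * c))
    (suppNorm_prodSeg_smul_single_le (L := L) (-(2 * c)))
  rw [abs_neg, abs_mul, abs_two, ← hup, ← hdown] at hlen
  simpa [polyLen, Fin.sum_univ_two, cyc] using hlen.trans_eq (by ring)

theorem exists_add_mem_sub_mem_of_four_le_xi {K : Set (EuclideanSpace ℝ (Fin (m + 1)))}
    (hxi : 4 ≤ xi (prodSeg L) K) {c : ℝ} (hc : c ∈ Set.Ico (0 : ℝ) 1) :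
    ∃ x, x + c • eₙ ∈ K ∧ x - c • eₙ ∈ K := by
  by_contra hnone
  have hnf : NotFit K ![-(c • eₙ), c • eₙ] := by
    rintro t ht
    refine hnone ⟨-t, ?_, ?_⟩
    · simpa [sub_eq_neg_add] using interior_subset (ht 1)
    · simpa [sub_eq_neg_add, add_comm] using interior_subset (ht 0)
  have hlen := polyLen_prodSeg_vertical_le (L := L) c
  rw [abs_of_nonneg hc.1] at hlen
  have := xi_lt_of_polyLen_lt le_rfl hnf four_pos (by linarith [hc.2])
  linarith

end Vertical

theorem contains_vertical_segment_general (m : ℕ)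
    (L : Set (EuclideanSpace ℝ (Fin m)))
    (K : Set (EuclideanSpace ℝ (Fin (m + 1)))) (hK : IsConvexBody K)
    (hxi : xi (prodSeg L) K ≥ 4) :
    ∃ x : EuclideanSpace ℝ (Fin (m + 1)), ∀ s ∈ Set.Icc (-1 : ℝ) 1,
      x + s • EuclideanSpace.single (Fin.last m) (1 : ℝ) ∈ K := by
  obtain ⟨x, hxadd, hxsub⟩ := hK.1.exists_add_mem_sub_mem_of_forall_lt_one fun c hc =>
    exists_add_mem_sub_mem_of_four_le_xi hxi hc
  exact ⟨x, fun s hs => hK.2.1.add_smul_mem_of_add_mem_of_sub_mem hxadd hxsub hs⟩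

/-- if `ξ_{L×[-1,1]}(K) ≥ 4`, then `K` contains a vertical segment of
`‖·‖_{L×[-1,1]}`-length `2`. -/
theorem contains_vertical_segment (m : ℕ) (hm : 1 ≤ m)
    (L : Set (EuclideanSpace ℝ (Fin m))) (hL : IsConvexBody L)
    (h0 : (0 : EuclideanSpace ℝ (Fin m)) ∈ interior L)
    (K : Set (EuclideanSpace ℝ (Fin (m + 1)))) (hK : IsConvexBody K)
    (hxi : xi (prodSeg L) K ≥ 4) :
    ∃ x : EuclideanSpace ℝ (Fin (m + 1)), ∀ s ∈ Set.Icc (-1 : ℝ) 1,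
      x + s • EuclideanSpace.single (Fin.last m) (1 : ℝ) ∈ K :=
  contains_vertical_segment_general m L K hK hxi
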